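/- Let d_x, d_y ≥ 1 and let l : ℝ^{d_x} × ℝ^{d_y} → ℝ be continuous with |l(x,y)| ≤ M for all (x,y), Lipschitz in x with constant C uniformly in y, and Lipschitz in y with constant C uniformly in x. Then the Nikaidô–Isoda error is Lipschitz: for all Borel probability measures μ, μ' on ℝ^{d_x} and ν, ν' on ℝ^{d_y}, |NI(μ, ν) − NI(μ', ν')| ≤ (M + C) · ( d_BL(μ, μ') + d_BL(ν, ν') ). -/

import Mathlib

open MeasureTheory NNReal

/-- The dual bounded-Lipschitz distance between two (probability) measures:
the supremum of `∫ f dμ - ∫ f dν` over bounded Lipschitz `f` with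
`‖f‖_∞ + Lip f ≤ 1`. -/
noncomputable def dBL {S : Type*} [MetricSpace S] [MeasurableSpace S]
    (μ ν : Measure S) : ℝ :=
  sSup {r : ℝ | ∃ f : S → ℝ, (∃ a b : ℝ, 0 ≤ a ∧ 0 ≤ b ∧ a + b ≤ 1 ∧
      (∀ x, |f x| ≤ a) ∧ LipschitzWith b.toNNReal f) ∧
    r = (∫ x, f x ∂μ) - ∫ x, f x ∂ν}

/-- The expected loss `L(μ, ν) = ∫∫ l(x,y) dμ(x) dν(y)`. -/
noncomputable def Lexp {dx dy : ℕ}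
    (l : EuclideanSpace ℝ (Fin dx) × EuclideanSpace ℝ (Fin dy) → ℝ)
    (μ : Measure (EuclideanSpace ℝ (Fin dx)))
    (ν : Measure (EuclideanSpace ℝ (Fin dy))) : ℝ :=
  ∫ y, (∫ x, l (x, y) ∂μ) ∂ν

/-- The Nikaidô–Isoda error
`NI(μ, ν) = sup_{ν'} L(μ, ν') - inf_{μ'} L(μ', ν)`, with the supremum and
infimum over Borel probability measures. -/
noncomputable def NIerr {dx dy : ℕ}
    (l : EuclideanSpace ℝ (Fin dx) × EuclideanSpace ℝ (Fin dy) → ℝ)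
    (μ : Measure (EuclideanSpace ℝ (Fin dx)))
    (ν : Measure (EuclideanSpace ℝ (Fin dy))) : ℝ :=
  (⨆ ν' : ProbabilityMeasure (EuclideanSpace ℝ (Fin dy)),
      Lexp l μ (ν' : Measure (EuclideanSpace ℝ (Fin dy)))) -
    ⨅ μ' : ProbabilityMeasure (EuclideanSpace ℝ (Fin dx)),
      Lexp l (μ' : Measure (EuclideanSpace ℝ (Fin dx))) ν

/- ### Auxiliary lemmas -/

lemma my_integrable_of_bound {S : Type*} [MeasurableSpace S] [TopologicalSpace S]
    [OpensMeasurableSpace S] (μ : Measure S) [IsFiniteMeasure μ]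
    (g : S → ℝ) (M : ℝ) (hc : Continuous g) (hbd : ∀ x, |g x| ≤ M) :
    Integrable g μ :=
  (integrable_const M).mono' hc.aestronglyMeasurable (Filter.Eventually.of_forall fun x => by
    simpa [Real.norm_eq_abs] using hbd x)

lemma my_abs_integral_le {S : Type*} [MeasurableSpace S] [TopologicalSpace S]
    [OpensMeasurableSpace S] (μ : Measure S) [IsProbabilityMeasure μ]
    (g : S → ℝ) (M : ℝ) (_hc : Continuous g) (hbd : ∀ x, |g x| ≤ M) :
    |∫ x, g x ∂μ| ≤ M := by
  have := norm_integral_le_of_norm_le_const (μ := μ) (f := g) (C := M)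
    (Filter.Eventually.of_forall fun x => by simpa [Real.norm_eq_abs] using hbd x)
  simpa [Real.norm_eq_abs, measure_univ] using this

lemma dBL_bddAbove {S : Type*} [MetricSpace S] [MeasurableSpace S] [OpensMeasurableSpace S]
    (μ ν : Measure S) [IsProbabilityMeasure μ] [IsProbabilityMeasure ν] :
    BddAbove {r : ℝ | ∃ f : S → ℝ, (∃ a b : ℝ, 0 ≤ a ∧ 0 ≤ b ∧ a + b ≤ 1 ∧
      (∀ x, |f x| ≤ a) ∧ LipschitzWith b.toNNReal f) ∧
    r = (∫ x, f x ∂μ) - ∫ x, f x ∂ν} := by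
  refine ⟨2, ?_⟩
  rintro r ⟨f, ⟨a, b, ha, hbb, hab, hfa, hfl⟩, rfl⟩
  have ha1 : a ≤ 1 := by linarith
  have h1 : |∫ x, f x ∂μ| ≤ a := my_abs_integral_le μ f a hfl.continuous hfa
  have h2 : |∫ x, f x ∂ν| ≤ a := my_abs_integral_le ν f a hfl.continuous hfa
  have h3 : |(∫ x, f x ∂μ) - ∫ x, f x ∂ν| ≤ a + a := (abs_sub _ _).trans (by linarith)
  calc (∫ x, f x ∂μ) - ∫ x, f x ∂ν ≤ |(∫ x, f x ∂μ) - ∫ x, f x ∂ν| := le_abs_self _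
    _ ≤ a + a := h3
    _ ≤ 2 := by linarith

lemma integral_sub_le_dBL {S : Type*} [MetricSpace S] [MeasurableSpace S]
    [OpensMeasurableSpace S]
    (μ ν : Measure S) [IsProbabilityMeasure μ] [IsProbabilityMeasure ν]
    (g : S → ℝ) (M : ℝ) (C : ℝ≥0) (hM : 0 ≤ M) (hbd : ∀ x, |g x| ≤ M)
    (hg : LipschitzWith C g) :
    (∫ x, g x ∂μ) - ∫ x, g x ∂ν ≤ (M + C) * dBL μ ν := by
  rcases eq_or_lt_of_le (add_nonneg hM C.coe_nonneg : (0:ℝ) ≤ M + C) with h0 | h0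
  · have hM0 : M = 0 := by
      have := C.coe_nonneg; linarith
    have hg0 : ∀ x, g x = 0 := fun x => abs_nonpos_iff.mp (hM0 ▸ hbd x)
    have : g = fun _ => (0:ℝ) := funext hg0
    simp [this, ← h0]
  · set T : ℝ := M + C with hT
    set f : S → ℝ := fun x => T⁻¹ * g x with hf
    have hTpos : 0 < T := h0
    have hfa : ∀ x, |f x| ≤ M / T := fun x => by
      rw [hf]
      simp only [abs_mul, abs_inv, abs_of_pos hTpos]
      rw [div_eq_inv_mul]
      exact mul_le_mul_of_nonneg_left (hbd x) (by positivity)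
    have hb' : (0:ℝ) ≤ (C : ℝ) / T := by positivity
    have hfl : LipschitzWith ((C / T : ℝ)).toNNReal f := by
      apply LipschitzWith.of_dist_le_mul
      intro x y
      have hd := hg.dist_le_mul x y
      have : dist (f x) (f y) = T⁻¹ * dist (g x) (g y) := by
        rw [hf]; simp only [Real.dist_eq, ← mul_sub, abs_mul, abs_inv, abs_of_pos hTpos]
      rw [this, Real.coe_toNNReal _ hb']
      rw [div_eq_inv_mul, mul_assoc]
      exact mul_le_mul_of_nonneg_left hd (by positivity)
    have hmem : (∫ x, f x ∂μ) - ∫ x, f x ∂ν ∈ {r : ℝ | ∃ f : S → ℝ,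
        (∃ a b : ℝ, 0 ≤ a ∧ 0 ≤ b ∧ a + b ≤ 1 ∧
        (∀ x, |f x| ≤ a) ∧ LipschitzWith b.toNNReal f) ∧
        r = (∫ x, f x ∂μ) - ∫ x, f x ∂ν} := by
      refine ⟨f, ⟨M / T, (C : ℝ) / T, by positivity, hb', ?_, hfa, hfl⟩, rfl⟩
      rw [← add_div, hT, div_self (ne_of_gt hTpos)]
    have hle : (∫ x, f x ∂μ) - ∫ x, f x ∂ν ≤ dBL μ ν :=
      le_csSup (dBL_bddAbove μ ν) hmem
    have hfint : ∀ (m : Measure S), ∫ x, f x ∂m = T⁻¹ * ∫ x, g x ∂m := fun m => by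
      rw [hf]; exact integral_const_mul _ _
    have hmul := mul_le_mul_of_nonneg_left hle (le_of_lt hTpos)
    calc (∫ x, g x ∂μ) - ∫ x, g x ∂ν
        = T * ((∫ x, f x ∂μ) - ∫ x, f x ∂ν) := by
          rw [hfint, hfint, mul_sub, ← mul_assoc, ← mul_assoc,
            mul_inv_cancel₀ (ne_of_gt hTpos), one_mul, one_mul]
      _ ≤ T * dBL μ ν := hmul
      _ = (M + C) * dBL μ ν := by rw [hT]

lemma abs_integral_sub_le_dBL {S : Type*} [MetricSpace S] [MeasurableSpace S]
    [OpensMeasurableSpace S]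
    (μ ν : Measure S) [IsProbabilityMeasure μ] [IsProbabilityMeasure ν]
    (g : S → ℝ) (M : ℝ) (C : ℝ≥0) (hM : 0 ≤ M) (hbd : ∀ x, |g x| ≤ M)
    (hg : LipschitzWith C g) :
    |(∫ x, g x ∂μ) - ∫ x, g x ∂ν| ≤ (M + C) * dBL μ ν := by
  rw [abs_sub_le_iff]
  constructor
  · exact integral_sub_le_dBL μ ν g M C hM hbd hg
  · have h := integral_sub_le_dBL μ ν (fun x => -g x) M C hM
      (fun x => by simpa using hbd x) hg.neg
    rw [integral_neg, integral_neg] at h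
    linarith

section helpers
variable {dx dy : ℕ}
  {l : EuclideanSpace ℝ (Fin dx) × EuclideanSpace ℝ (Fin dy) → ℝ}
  {M : ℝ} {C : ℝ≥0}

lemma Lexp_fubini (hc : Continuous l) (hb : ∀ x y, |l (x, y)| ≤ M)
    (m : Measure (EuclideanSpace ℝ (Fin dx))) [IsProbabilityMeasure m]
    (σ : Measure (EuclideanSpace ℝ (Fin dy))) [IsProbabilityMeasure σ] :
    Lexp l m σ = ∫ x, (∫ y, l (x, y) ∂σ) ∂m := by
  rw [Lexp]
  exact (integral_integral_swap (my_integrable_of_bound (m.prod σ)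
    (fun p => l (p.1, p.2)) M (hc.comp (continuous_fst.prodMk continuous_snd))
    (fun p => hb p.1 p.2))).symm

lemma g_bound (hc : Continuous l) (hb : ∀ x y, |l (x, y)| ≤ M)
    (σ : Measure (EuclideanSpace ℝ (Fin dy))) [IsProbabilityMeasure σ] :
    ∀ x, |∫ y, l (x, y) ∂σ| ≤ M := fun x =>
  my_abs_integral_le σ _ M (hc.comp (continuous_const.prodMk continuous_id)) (hb x)

lemma h_bound (hc : Continuous l) (hb : ∀ x y, |l (x, y)| ≤ M)
    (m : Measure (EuclideanSpace ℝ (Fin dx))) [IsProbabilityMeasure m] :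
    ∀ y, |∫ x, l (x, y) ∂m| ≤ M := fun y =>
  my_abs_integral_le m _ M (hc.comp (continuous_id.prodMk continuous_const))
    (fun x => hb x y)

lemma g_lip (hc : Continuous l) (hb : ∀ x y, |l (x, y)| ≤ M)
    (hlx : ∀ y, LipschitzWith C (fun x => l (x, y)))
    (σ : Measure (EuclideanSpace ℝ (Fin dy))) [IsProbabilityMeasure σ] :
    LipschitzWith C (fun x => ∫ y, l (x, y) ∂σ) := by
  apply LipschitzWith.of_dist_le_mul
  intro x x'
  have hi : ∀ x, Integrable (fun y => l (x, y)) σ := fun x =>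
    my_integrable_of_bound σ _ M (hc.comp (continuous_const.prodMk continuous_id)) (hb x)
  rw [Real.dist_eq, ← integral_sub (hi x) (hi x')]
  refine my_abs_integral_le σ _ _ ?_ ?_
  · exact (hc.comp (continuous_const.prodMk continuous_id)).sub
      (hc.comp (continuous_const.prodMk continuous_id))
  · intro y
    have := (hlx y).dist_le_mul x x'
    rwa [Real.dist_eq] at this

lemma h_lip (hc : Continuous l) (hb : ∀ x y, |l (x, y)| ≤ M)
    (hly : ∀ x, LipschitzWith C (fun y => l (x, y)))
    (m : Measure (EuclideanSpace ℝ (Fin dx))) [IsProbabilityMeasure m] :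
    LipschitzWith C (fun y => ∫ x, l (x, y) ∂m) := by
  apply LipschitzWith.of_dist_le_mul
  intro y y'
  have hi : ∀ y, Integrable (fun x => l (x, y)) m := fun y =>
    my_integrable_of_bound m _ M (hc.comp (continuous_id.prodMk continuous_const))
      (fun x => hb x y)
  rw [Real.dist_eq, ← integral_sub (hi y) (hi y')]
  refine my_abs_integral_le m _ _ ?_ ?_
  · exact (hc.comp (continuous_id.prodMk continuous_const)).sub
      (hc.comp (continuous_id.prodMk continuous_const))
  · intro x
    have := (hly x).dist_le_mul y y'
    rwa [Real.dist_eq] at this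

lemma Lexp_abs_le (hc : Continuous l) (hb : ∀ x y, |l (x, y)| ≤ M)
    (hly : ∀ x, LipschitzWith C (fun y => l (x, y)))
    (m : Measure (EuclideanSpace ℝ (Fin dx))) [IsProbabilityMeasure m]
    (σ : Measure (EuclideanSpace ℝ (Fin dy))) [IsProbabilityMeasure σ] :
    |Lexp l m σ| ≤ M :=
  my_abs_integral_le σ _ M (h_lip hc hb hly m).continuous (h_bound hc hb m)

end helpers

lemma my_ciSup_sub_le {ι : Type*} [Nonempty ι] (f g : ι → ℝ) (K : ℝ)
    (hg : BddAbove (Set.range g)) (h : ∀ i, f i - g i ≤ K) :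
    (⨆ i, f i) - ⨆ i, g i ≤ K := by
  rw [sub_le_iff_le_add]
  exact ciSup_le fun i => by
    have := le_ciSup hg i; linarith [h i]

lemma my_ciInf_sub_le {ι : Type*} [Nonempty ι] (f g : ι → ℝ) (K : ℝ)
    (hf : BddBelow (Set.range f)) (h : ∀ i, f i - g i ≤ K) :
    (⨅ i, f i) - ⨅ i, g i ≤ K := by
  have h2 : (⨅ i, f i) - K ≤ ⨅ i, g i := le_ciInf fun i => by
    have := ciInf_le hf i; linarith [h i]
  linarith

theorem stmt7 {dx dy : ℕ} (hdx : 1 ≤ dx) (hdy : 1 ≤ dy)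
    (l : EuclideanSpace ℝ (Fin dx) × EuclideanSpace ℝ (Fin dy) → ℝ)
    (M : ℝ) (C : ℝ≥0) (hc : Continuous l)
    (hb : ∀ x y, |l (x, y)| ≤ M)
    (hlx : ∀ y, LipschitzWith C (fun x => l (x, y)))
    (hly : ∀ x, LipschitzWith C (fun y => l (x, y)))
    (μ μ' : Measure (EuclideanSpace ℝ (Fin dx)))
    [IsProbabilityMeasure μ] [IsProbabilityMeasure μ']
    (ν ν' : Measure (EuclideanSpace ℝ (Fin dy)))
    [IsProbabilityMeasure ν] [IsProbabilityMeasure ν'] :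
    |NIerr l μ ν - NIerr l μ' ν'| ≤ (M + C) * (dBL μ μ' + dBL ν ν') := by
  have hM : 0 ≤ M := le_trans (abs_nonneg _) (hb 0 0)
  haveI : Nonempty (ProbabilityMeasure (EuclideanSpace ℝ (Fin dy))) :=
    ⟨⟨Measure.dirac 0, inferInstance⟩⟩
  haveI : Nonempty (ProbabilityMeasure (EuclideanSpace ℝ (Fin dx))) :=
    ⟨⟨Measure.dirac 0, inferInstance⟩⟩
  set K1 : ℝ := (M + C) * dBL μ μ' with hK1
  set K2 : ℝ := (M + C) * dBL ν ν' with hK2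
  -- bounds on suprema families
  have hbddA : ∀ (m : Measure (EuclideanSpace ℝ (Fin dx))), IsProbabilityMeasure m →
      BddAbove (Set.range fun σ : ProbabilityMeasure (EuclideanSpace ℝ (Fin dy)) =>
        Lexp l m (σ : Measure (EuclideanSpace ℝ (Fin dy)))) := by
    intro m hm
    refine ⟨M, ?_⟩
    rintro r ⟨σ, rfl⟩
    exact (abs_le.mp (Lexp_abs_le hc hb hly m σ)).2
  have hbddB : ∀ (n : Measure (EuclideanSpace ℝ (Fin dy))), IsProbabilityMeasure n →
      BddBelow (Set.range fun τ : ProbabilityMeasure (EuclideanSpace ℝ (Fin dx)) =>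
        Lexp l (τ : Measure (EuclideanSpace ℝ (Fin dx))) n) := by
    intro n hn
    refine ⟨-M, ?_⟩
    rintro r ⟨τ, rfl⟩
    exact (abs_le.mp (Lexp_abs_le hc hb hly (τ : Measure (EuclideanSpace ℝ (Fin dx))) n)).1
  -- per-index estimates
  have key1 : ∀ σ : ProbabilityMeasure (EuclideanSpace ℝ (Fin dy)),
      |Lexp l μ (σ : Measure (EuclideanSpace ℝ (Fin dy))) -
        Lexp l μ' (σ : Measure (EuclideanSpace ℝ (Fin dy)))| ≤ K1 := fun σ => by
    rw [Lexp_fubini hc hb μ (σ : Measure (EuclideanSpace ℝ (Fin dy))),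
      Lexp_fubini hc hb μ' (σ : Measure (EuclideanSpace ℝ (Fin dy)))]
    exact abs_integral_sub_le_dBL μ μ' _ M C hM
      (g_bound hc hb (σ : Measure (EuclideanSpace ℝ (Fin dy))))
      (g_lip hc hb hlx (σ : Measure (EuclideanSpace ℝ (Fin dy))))
  have key2 : ∀ τ : ProbabilityMeasure (EuclideanSpace ℝ (Fin dx)),
      |Lexp l (τ : Measure (EuclideanSpace ℝ (Fin dx))) ν -
        Lexp l (τ : Measure (EuclideanSpace ℝ (Fin dx))) ν'| ≤ K2 := fun τ =>
    abs_integral_sub_le_dBL ν ν' _ M C hM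
      (h_bound hc hb (τ : Measure (EuclideanSpace ℝ (Fin dx))))
      (h_lip hc hb hly (τ : Measure (EuclideanSpace ℝ (Fin dx))))
  -- sup and inf comparisons
  have hA1 := my_ciSup_sub_le
    (fun σ : ProbabilityMeasure (EuclideanSpace ℝ (Fin dy)) =>
      Lexp l μ (σ : Measure (EuclideanSpace ℝ (Fin dy))))
    (fun σ => Lexp l μ' (σ : Measure (EuclideanSpace ℝ (Fin dy)))) K1
    (hbddA μ' inferInstance) (fun σ => (abs_sub_le_iff.mp (key1 σ)).1)
  have hA2 := my_ciSup_sub_le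
    (fun σ : ProbabilityMeasure (EuclideanSpace ℝ (Fin dy)) =>
      Lexp l μ' (σ : Measure (EuclideanSpace ℝ (Fin dy))))
    (fun σ => Lexp l μ (σ : Measure (EuclideanSpace ℝ (Fin dy)))) K1
    (hbddA μ inferInstance) (fun σ => (abs_sub_le_iff.mp (key1 σ)).2)
  have hB1 := my_ciInf_sub_le
    (fun τ : ProbabilityMeasure (EuclideanSpace ℝ (Fin dx)) =>
      Lexp l (τ : Measure (EuclideanSpace ℝ (Fin dx))) ν)
    (fun τ => Lexp l (τ : Measure (EuclideanSpace ℝ (Fin dx))) ν') K2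
    (hbddB ν inferInstance) (fun τ => (abs_sub_le_iff.mp (key2 τ)).1)
  have hB2 := my_ciInf_sub_le
    (fun τ : ProbabilityMeasure (EuclideanSpace ℝ (Fin dx)) =>
      Lexp l (τ : Measure (EuclideanSpace ℝ (Fin dx))) ν')
    (fun τ => Lexp l (τ : Measure (EuclideanSpace ℝ (Fin dx))) ν) K2
    (hbddB ν' inferInstance) (fun τ => (abs_sub_le_iff.mp (key2 τ)).2)
  have hsum : (M + C) * (dBL μ μ' + dBL ν ν') = K1 + K2 := by
    rw [hK1, hK2, mul_add]
  rw [NIerr, NIerr, hsum, abs_le]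
  constructor <;> linarith
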